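/- arXiv:1511.05208 — 4 statements merged into one kernel-verified Lean document; each statement's English description precedes it below -/
import Mathlib

section
/- Let Π₁, Π₂ ∈ ℂ^{n×n} and ℂ^{m×m} be orthogonal projection matrices. Then for any A ∈ ℂ^{m×n}, ‖A − Π₂ A Π₁‖_F² ≤ ‖A − A Π₁‖_F² + ‖A − Π₂ A‖_F². (This is the matrix case d = 2 of the tensor projection lemma.) -/
open Matrix BigOperators

/-- Frobenius norm of a complex matrix. -/
noncomputable def frob {m n : Type*} [Fintype m] [Fintype n] (A : Matrix m n ℂ) : ℝ :=
  Real.sqrt (∑ i, ∑ j, ‖A i j‖ ^ 2)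

/-!
Split `A - P₂ A P₁ = (A - P₂ A) + P₂ (A - A P₁)`. The two summands are orthogonal for the
Frobenius inner product `⟨X, Y⟩ = tr (Xᴴ Y)`, since `P₂` is a self-adjoint idempotent, so the
squared norm of the sum is the sum of squared norms; and multiplying by `P₂` does not increase
the Frobenius norm, again by Pythagoras applied to `B = (B - P₂ B) + P₂ B`.
-/

section Frobenius

variable {m n : Type*} [Fintype m] [Fintype n]

theorem frob_sq (A : Matrix m n ℂ) : frob A ^ 2 = ∑ i, ∑ j, ‖A i j‖ ^ 2 :=
  Real.sq_sqrt (by positivity)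

theorem frob_sq_eq_re_trace (A : Matrix m n ℂ) : frob A ^ 2 = (Aᴴ * A).trace.re := by
  simp only [frob_sq, trace, diag_apply, mul_apply, conjTranspose_apply, Complex.re_sum]
  rw [Finset.sum_comm]
  simp [Complex.sq_norm, Complex.normSq_apply, Complex.mul_re]

theorem frob_sq_add_of_conjTranspose_mul_eq_zero {X Y : Matrix m n ℂ} (h : Xᴴ * Y = 0) :
    frob (X + Y) ^ 2 = frob X ^ 2 + frob Y ^ 2 := by
  have h' : Yᴴ * X = 0 := by
    rw [← conjTranspose_conjTranspose X, ← conjTranspose_mul, h, conjTranspose_zero]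
  simp only [frob_sq_eq_re_trace, conjTranspose_add, Matrix.add_mul, Matrix.mul_add, trace_add,
    h, h', trace_zero, Complex.add_re, Complex.zero_re]
  ring

end Frobenius

namespace IsStarProjection

variable {l m n : Type*} [Fintype m]

theorem conjTranspose_sub_mul_mul_mul_eq_zero {R : Type*} [Ring R] [StarRing R]
    {P : Matrix m m R} (hP : IsStarProjection P) (X : Matrix m n R)
    (Y : Matrix m l R) : (X - P * X)ᴴ * (P * Y) = 0 := by
  have hself : Pᴴ = P := hP.isSelfAdjoint
  rw [conjTranspose_sub, conjTranspose_mul, hself, Matrix.sub_mul, Matrix.mul_assoc,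
    ← Matrix.mul_assoc P, hP.isIdempotentElem.eq, sub_self]

theorem frob_mul_sq_le [Fintype n] {P : Matrix m m ℂ} (hP : IsStarProjection P)
    (B : Matrix m n ℂ) : frob (P * B) ^ 2 ≤ frob B ^ 2 := by
  have hpyth :=
    frob_sq_add_of_conjTranspose_mul_eq_zero (hP.conjTranspose_sub_mul_mul_mul_eq_zero B B)
  rw [sub_add_cancel] at hpyth
  linarith [sq_nonneg (frob (B - P * B))]

end IsStarProjection

theorem frob_sq_two_proj_le_general {m n : ℕ}
    (P₁ : Matrix (Fin n) (Fin n) ℂ)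
    (P₂ : Matrix (Fin m) (Fin m) ℂ) (h₂idem : P₂ * P₂ = P₂) (h₂herm : P₂ᴴ = P₂)
    (A : Matrix (Fin m) (Fin n) ℂ) :
    frob (A - P₂ * A * P₁) ^ 2 ≤ frob (A - A * P₁) ^ 2 + frob (A - P₂ * A) ^ 2 := by
  have hP₂ : IsStarProjection P₂ := ⟨h₂idem, h₂herm⟩
  have hsplit : A - P₂ * A * P₁ = (A - P₂ * A) + P₂ * (A - A * P₁) := by
    rw [Matrix.mul_sub, ← Matrix.mul_assoc]
    abel
  rw [hsplit, frob_sq_add_of_conjTranspose_mul_eq_zero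
    (hP₂.conjTranspose_sub_mul_mul_mul_eq_zero A (A - A * P₁))]
  linarith [hP₂.frob_mul_sq_le (A - A * P₁)]

/-- For orthogonal projectors `P₁ : ℂ^{n×n}` and `P₂ : ℂ^{m×m}`,
`‖A − P₂ A P₁‖_F² ≤ ‖A − A P₁‖_F² + ‖A − P₂ A‖_F²` (matrix case `d = 2` of the
tensor projection lemma). -/
theorem frob_sq_two_proj_le {m n : ℕ}
    (P₁ : Matrix (Fin n) (Fin n) ℂ) (h₁idem : P₁ * P₁ = P₁) (h₁herm : P₁ᴴ = P₁)
    (P₂ : Matrix (Fin m) (Fin m) ℂ) (h₂idem : P₂ * P₂ = P₂) (h₂herm : P₂ᴴ = P₂)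
    (A : Matrix (Fin m) (Fin n) ℂ) :
    frob (A - P₂ * A * P₁) ^ 2 ≤ frob (A - A * P₁) ^ 2 + frob (A - P₂ * A) ^ 2 :=
  frob_sq_two_proj_le_general P₁ P₂ h₂idem h₂herm A
end

section
/- Let V ∈ ℂ^{n×k} have orthonormal columns and P ∈ ℂ^{n×k} consist of distinct columns of the identity with V*P invertible, and set Π_p = P(V*P)^{-1}V*. Then ‖Π_p‖₂ = ‖(V*P)^{-1}‖₂. -/
open Matrix BigOperators

/-- Spectral norm (largest singular value) of a complex matrix. -/
noncomputable def spec {m n : Type*} [Fintype m] [Fintype n] [DecidableEq n]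
    (A : Matrix m n ℂ) : ℝ :=
  ‖LinearMap.toContinuousLinearMap (Matrix.toEuclideanLin A)‖

/-- The column-selection matrix `I(:,p)` built from an index map `p`. -/
def colSel {n r : ℕ} (p : Fin r → Fin n) : Matrix (Fin n) (Fin r) ℂ :=
  Matrix.of fun i j => if i = p j then 1 else 0

open scoped Matrix.Norms.L2Operator

lemma spec_eq_l2 {m n : Type*} [Fintype m] [Fintype n] [DecidableEq n]
    (A : Matrix m n ℂ) : spec A = ‖A‖ := rfl

lemma l2_norm_one_le (k : ℕ) : ‖(1 : Matrix (Fin k) (Fin k) ℂ)‖ ≤ 1 := by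
  rw [Matrix.cstar_norm_def, _root_.map_one]
  exact ContinuousLinearMap.norm_id_le

lemma l2_norm_le_one_of_isometry {m k : ℕ} (W : Matrix (Fin m) (Fin k) ℂ)
    (hW : Wᴴ * W = 1) : ‖W‖ ≤ 1 := by
  have h := Matrix.l2_opNorm_conjTranspose_mul_self W
  rw [hW] at h
  have h1 := l2_norm_one_le k
  nlinarith [norm_nonneg W]

lemma colSel_orth {n r : ℕ} (p : Fin r → Fin n) (hp : Function.Injective p) :
    (colSel p)ᴴ * colSel p = 1 := by
  ext a b
  simp only [Matrix.mul_apply, Matrix.conjTranspose_apply, colSel, Matrix.of_apply,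
    Matrix.one_apply]
  rw [Finset.sum_eq_single (p a)]
  · simp [hp.eq_iff, eq_comm]
  · intro i _ hi
    simp [hi]
  · simp

/-- `‖Π_p‖₂ = ‖(V*P)⁻¹‖₂` for the interpolatory projector `Π_p = P(V*P)⁻¹V*`. -/
theorem spec_interpProj {n k : ℕ}
    (V : Matrix (Fin n) (Fin k) ℂ) (hV : Vᴴ * V = 1)
    (p : Fin k → Fin n) (hp : Function.Injective p)
    (hinv : IsUnit (Vᴴ * colSel p)) :
    spec (colSel p * (Vᴴ * colSel p)⁻¹ * Vᴴ) = spec ((Vᴴ * colSel p)⁻¹) := by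
  set P := colSel p with hPdef
  set B := (Vᴴ * P)⁻¹ with hBdef
  have hP : Pᴴ * P = 1 := colSel_orth p hp
  have hPle : ‖P‖ ≤ 1 := l2_norm_le_one_of_isometry P hP
  have hVle : ‖V‖ ≤ 1 := l2_norm_le_one_of_isometry V hV
  have hVHle : ‖Vᴴ‖ ≤ 1 := by rw [Matrix.l2_opNorm_conjTranspose]; exact hVle
  have hPHle : ‖Pᴴ‖ ≤ 1 := by rw [Matrix.l2_opNorm_conjTranspose]; exact hPle
  simp only [spec_eq_l2]
  have key : Pᴴ * (P * B * Vᴴ) * V = B := by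
    have h1 : Pᴴ * (P * B * Vᴴ) * V = (Pᴴ * P) * (B * (Vᴴ * V)) := by
      simp only [Matrix.mul_assoc]
    rw [h1, hP, hV, one_mul, mul_one]
  apply le_antisymm
  · have m1 := Matrix.l2_opNorm_mul (P * B) Vᴴ
    have m2 := Matrix.l2_opNorm_mul P B
    nlinarith [norm_nonneg (P * B), norm_nonneg B, norm_nonneg Vᴴ, norm_nonneg P]
  · have m1 := Matrix.l2_opNorm_mul (Pᴴ * (P * B * Vᴴ)) V
    have m2 := Matrix.l2_opNorm_mul Pᴴ (P * B * Vᴴ)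
    rw [key] at m1
    nlinarith [norm_nonneg (Pᴴ * (P * B * Vᴴ)), norm_nonneg (P * B * Vᴴ),
      norm_nonneg V, norm_nonneg Pᴴ]
end

section
/- Let V ∈ ℂ^{n×k} have orthonormal columns, P ∈ ℂ^{n×k} consist of distinct columns of the identity with V*P invertible, and Π_p = P(V*P)^{-1}V*. Then for any A ∈ ℂ^{m×n}, ‖A − A Π_p‖_F ≤ ‖I − Π_p‖₂ · ‖A (I − V V*)‖_F. -/
open Matrix BigOperators

/-!
Since `V* Π_p = V*`, the factor `I − Π_p` is unchanged by first applying `I − VV*`, so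
`A − AΠ_p = A(I − VV*)(I − Π_p)`. The bound is then `‖XY‖_F ≤ ‖X‖_F ‖Y‖₂`, which follows column
by column from `‖Yx‖ ≤ ‖Y‖₂ ‖x‖` after passing to conjugate transposes.
-/

section Norms

variable {l m n : Type*} [Fintype l] [Fintype m] [Fintype n]

lemma spec_nonneg [DecidableEq n] (A : Matrix m n ℂ) : 0 ≤ spec A :=
  norm_nonneg _

lemma frob_conjTranspose (A : Matrix m n ℂ) : frob Aᴴ = frob A := by
  unfold frob
  rw [Finset.sum_comm]
  simp only [conjTranspose_apply, norm_star]

lemma spec_conjTranspose [DecidableEq m] [DecidableEq n] (A : Matrix m n ℂ) :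
    spec Aᴴ = spec A := by
  unfold spec
  rw [toEuclideanLin_conjTranspose_eq_adjoint, LinearMap.adjoint_toContinuousLinearMap]
  exact ContinuousLinearMap.adjoint.norm_map _

lemma norm_toEuclideanLin_le [DecidableEq n] (A : Matrix m n ℂ) (x : EuclideanSpace ℂ n) :
    ‖toEuclideanLin A x‖ ≤ spec A * ‖x‖ :=
  (LinearMap.toContinuousLinearMap (toEuclideanLin A)).le_opNorm x

lemma frob_eq_sqrt_sum_norm_col_sq (A : Matrix m n ℂ) :
    frob A = Real.sqrt (∑ j, ‖WithLp.toLp 2 (fun i => A i j)‖ ^ 2) := by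
  simp only [frob, EuclideanSpace.norm_eq,
    Real.sq_sqrt (Finset.sum_nonneg fun _ _ => sq_nonneg _)]
  exact congrArg Real.sqrt Finset.sum_comm

lemma frob_mul_le_spec_mul [DecidableEq n] (B : Matrix m n ℂ) (C : Matrix n l ℂ) :
    frob (B * C) ≤ spec B * frob C := by
  have hcol (j : l) : WithLp.toLp 2 (fun i => (B * C) i j) =
      toEuclideanLin B (WithLp.toLp 2 (fun i => C i j)) := rfl
  rw [frob_eq_sqrt_sum_norm_col_sq, frob_eq_sqrt_sum_norm_col_sq,
    ← Real.sqrt_sq (spec_nonneg B), ← Real.sqrt_mul (sq_nonneg _), Finset.mul_sum]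
  refine Real.sqrt_le_sqrt (Finset.sum_le_sum fun j _ => ?_)
  rw [hcol, ← mul_pow]
  exact pow_le_pow_left₀ (norm_nonneg _) (norm_toEuclideanLin_le B _) 2

lemma frob_mul_le_frob_mul_spec [DecidableEq l] [DecidableEq n]
    (B : Matrix m n ℂ) (C : Matrix n l ℂ) : frob (B * C) ≤ spec C * frob B := by
  rw [← frob_conjTranspose, conjTranspose_mul, ← frob_conjTranspose B, ← spec_conjTranspose C]
  exact frob_mul_le_spec_mul Cᴴ Bᴴ

end Norms

section Projector

variable {R : Type*} {k m n : Type*} [Fintype k] [Fintype n]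

lemma mul_mul_nonsing_inv_mul_self [CommRing R] [DecidableEq k] {W : Matrix k n R}
    {P : Matrix n k R} (h : IsUnit (W * P)) :
    W * (P * (W * P)⁻¹ * W) = W := by
  rw [← Matrix.mul_assoc, ← Matrix.mul_assoc,
    mul_nonsing_inv _ ((isUnit_iff_isUnit_det _).mp h), Matrix.one_mul]

lemma sub_mul_eq_mul_one_sub_mul_one_sub [Ring R] [DecidableEq n] {W : Matrix k n R}
    {Q : Matrix n n R} (hQ : W * Q = W) (V : Matrix n k R) (A : Matrix m n R) :
    A - A * Q = A * (1 - V * W) * (1 - Q) := by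
  rw [Matrix.mul_assoc A, Matrix.sub_mul, Matrix.mul_assoc V, Matrix.mul_sub W, hQ]
  simp only [Matrix.mul_one, Matrix.one_mul, sub_self, Matrix.mul_zero, sub_zero, Matrix.mul_sub]

end Projector

theorem frob_sub_interpProj_le_general {m n k : ℕ}
    (V : Matrix (Fin n) (Fin k) ℂ)
    (p : Fin k → Fin n)
    (hinv : IsUnit (Vᴴ * colSel p))
    (A : Matrix (Fin m) (Fin n) ℂ) :
    frob (A - A * (colSel p * (Vᴴ * colSel p)⁻¹ * Vᴴ))
      ≤ spec (1 - colSel p * (Vᴴ * colSel p)⁻¹ * Vᴴ) * frob (A * (1 - V * Vᴴ)) := by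
  rw [sub_mul_eq_mul_one_sub_mul_one_sub (mul_mul_nonsing_inv_mul_self hinv) V]
  exact frob_mul_le_frob_mul_spec _ _

/-- `‖A − A Π_p‖_F ≤ ‖I − Π_p‖₂ ‖A(I − VV*)‖_F` for the interpolatory projector
`Π_p = P(V*P)⁻¹V*`. -/
theorem frob_sub_interpProj_le {m n k : ℕ}
    (V : Matrix (Fin n) (Fin k) ℂ) (hV : Vᴴ * V = 1)
    (p : Fin k → Fin n) (hp : Function.Injective p)
    (hinv : IsUnit (Vᴴ * colSel p))
    (A : Matrix (Fin m) (Fin n) ℂ) :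
    frob (A - A * (colSel p * (Vᴴ * colSel p)⁻¹ * Vᴴ))
      ≤ spec (1 - colSel p * (Vᴴ * colSel p)⁻¹ * Vᴴ) * frob (A * (1 - V * Vᴴ)) :=
  frob_sub_interpProj_le_general V p hinv A
end

section
/- Let Π_n ∈ ℂ^{I_n×I_n}, n = 1,…,d, be orthogonal projection matrices acting on the modes of a tensor X ∈ ℂ^{I₁×⋯×I_d}. Then ‖X − X ×₁ Π₁ ×₂ ⋯ ×_d Π_d‖_F² ≤ ∑_{n=1}^d ‖X − X ×_n Π_n‖_F². (Take d = 3 for concreteness: for orthogonal projectors P, Q, R, ‖X − X ×₁P ×₂Q ×₃R‖_F² ≤ ‖X − X×₁P‖_F² + ‖X − X×₂Q‖_F² + ‖X − X×₃R‖_F².) -/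
/-!
Write `x - r (q y)` as `(x - r x) + r (x - q y)`: the two summands are orthogonal and the
orthogonal projection `r` does not increase norms, so
`‖x - r (q y)‖² ≤ ‖x - r x‖² + ‖x - q y‖²`, and the same step once more splits off `q`.
Flattening a tensor to a vector of `EuclideanSpace ℂ (Fin a × Fin b × Fin c)` turns the
Frobenius norm into the Euclidean norm and `×₂ Q`, `×₃ R` into the Kronecker products
`1 ⊗ Q ⊗ 1`, `1 ⊗ 1 ⊗ R`, which are orthogonal projections.
-/

open Matrix BigOperators

/-- Frobenius norm of a third-order complex tensor. -/
noncomputable def tfrob {a b c : ℕ} (X : Fin a → Fin b → Fin c → ℂ) : ℝ :=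
  Real.sqrt (∑ i, ∑ j, ∑ k, ‖X i j k‖ ^ 2)

/-- Mode-1 product `X ×₁ P` of a third-order tensor with a matrix. -/
noncomputable def mode1 {a b c : ℕ} (P : Matrix (Fin a) (Fin a) ℂ)
    (X : Fin a → Fin b → Fin c → ℂ) : Fin a → Fin b → Fin c → ℂ :=
  fun i j k => ∑ l, P i l * X l j k

/-- Mode-2 product `X ×₂ Q` of a third-order tensor with a matrix. -/
noncomputable def mode2 {a b c : ℕ} (Q : Matrix (Fin b) (Fin b) ℂ)
    (X : Fin a → Fin b → Fin c → ℂ) : Fin a → Fin b → Fin c → ℂ :=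
  fun i j k => ∑ l, Q j l * X i l k

/-- Mode-3 product `X ×₃ R` of a third-order tensor with a matrix. -/
noncomputable def mode3 {a b c : ℕ} (R : Matrix (Fin c) (Fin c) ℂ)
    (X : Fin a → Fin b → Fin c → ℂ) : Fin a → Fin b → Fin c → ℂ :=
  fun i j k => ∑ l, R k l * X i j l

open scoped Kronecker

theorem Submodule.norm_sub_starProjection_sq_le {𝕜 E : Type*} [RCLike 𝕜] [NormedAddCommGroup E]
    [InnerProductSpace 𝕜 E] (K : Submodule 𝕜 E) [K.HasOrthogonalProjection] (x y : E) :
    ‖x - K.starProjection y‖ ^ 2 ≤ ‖x - K.starProjection x‖ ^ 2 + ‖x - y‖ ^ 2 := by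
  have hsplit : x - K.starProjection y = (x - K.starProjection x) + K.starProjection (x - y) := by
    rw [map_sub]; abel
  have horth : inner 𝕜 (x - K.starProjection x) (K.starProjection (x - y)) = 0 :=
    K.starProjection_inner_eq_zero _ _ (K.starProjection_apply_mem _)
  rw [hsplit, norm_add_sq (𝕜 := 𝕜), horth, map_zero, mul_zero, add_zero]
  gcongr
  exact K.norm_starProjection_apply_le _

theorem IsStarProjection.norm_sub_apply_sq_le {𝕜 E : Type*} [RCLike 𝕜] [NormedAddCommGroup E]
    [InnerProductSpace 𝕜 E] [CompleteSpace E] {p : E →L[𝕜] E} (hp : IsStarProjection p)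
    (x y : E) : ‖x - p y‖ ^ 2 ≤ ‖x - p x‖ ^ 2 + ‖x - y‖ ^ 2 := by
  obtain ⟨K, _, rfl⟩ := isStarProjection_iff_eq_starProjection.mp hp
  exact K.norm_sub_starProjection_sq_le x y

theorem IsStarProjection.kronecker {R m n : Type*} [CommSemiring R] [StarRing R]
    [Fintype m] [Fintype n] {A : Matrix m m R} {B : Matrix n n R}
    (hA : IsStarProjection A) (hB : IsStarProjection B) : IsStarProjection (A ⊗ₖ B) where
  isIdempotentElem := by
    rw [IsIdempotentElem, ← mul_kronecker_mul, hA.isIdempotentElem.eq, hB.isIdempotentElem.eq]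
  isSelfAdjoint := by
    rw [IsSelfAdjoint, star_eq_conjTranspose, conjTranspose_kronecker, ← star_eq_conjTranspose,
      ← star_eq_conjTranspose, hA.isSelfAdjoint.star_eq, hB.isSelfAdjoint.star_eq]

section TensorVec

variable {a b c : ℕ}

def tensorVec (X : Fin a → Fin b → Fin c → ℂ) : EuclideanSpace ℂ (Fin a × Fin b × Fin c) :=
  WithLp.toLp 2 fun t => X t.1 t.2.1 t.2.2

theorem tensorVec_sub (X Y : Fin a → Fin b → Fin c → ℂ) :
    tensorVec (X - Y) = tensorVec X - tensorVec Y :=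
  rfl

theorem tfrob_sq_eq_norm_sq_tensorVec (X : Fin a → Fin b → Fin c → ℂ) : tfrob X ^ 2 = ‖tensorVec X‖ ^ 2 := by
  rw [tfrob, Real.sq_sqrt (by positivity), EuclideanSpace.norm_sq_eq]
  simp only [Fintype.sum_prod_type, tensorVec]

theorem tensorVec_mode2 (Q : Matrix (Fin b) (Fin b) ℂ) (X : Fin a → Fin b → Fin c → ℂ) :
    tensorVec (mode2 Q X) = toEuclideanCLM (𝕜 := ℂ) (1 ⊗ₖ (Q ⊗ₖ 1)) (tensorVec X) := by
  ext ⟨i, j, k⟩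
  simp [tensorVec, mode2, mulVec, dotProduct, Fintype.sum_prod_type, one_apply]

theorem tensorVec_mode3 (R : Matrix (Fin c) (Fin c) ℂ) (X : Fin a → Fin b → Fin c → ℂ) :
    tensorVec (mode3 R X) = toEuclideanCLM (𝕜 := ℂ) (1 ⊗ₖ (1 ⊗ₖ R)) (tensorVec X) := by
  ext ⟨i, j, k⟩
  simp [tensorVec, mode3, mulVec, dotProduct, Fintype.sum_prod_type, one_apply]

end TensorVec

theorem tensor_projection_lemma_general {a b c : ℕ}
    (P : Matrix (Fin a) (Fin a) ℂ)
    (Q : Matrix (Fin b) (Fin b) ℂ) (hQ : Q * Q = Q) (hQ' : Qᴴ = Q)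
    (R : Matrix (Fin c) (Fin c) ℂ) (hR : R * R = R) (hR' : Rᴴ = R)
    (X : Fin a → Fin b → Fin c → ℂ) :
    tfrob (X - mode3 R (mode2 Q (mode1 P X))) ^ 2
      ≤ tfrob (X - mode1 P X) ^ 2 + tfrob (X - mode2 Q X) ^ 2
        + tfrob (X - mode3 R X) ^ 2 := by
  simp only [tfrob_sq_eq_norm_sq_tensorVec, tensorVec_sub, tensorVec_mode3, tensorVec_mode2]
  set q := toEuclideanCLM (𝕜 := ℂ) (1 ⊗ₖ (Q ⊗ₖ 1) : Matrix (Fin a × Fin b × Fin c) _ ℂ)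
  set r := toEuclideanCLM (𝕜 := ℂ) (1 ⊗ₖ (1 ⊗ₖ R) : Matrix (Fin a × Fin b × Fin c) _ ℂ)
  set x := tensorVec X
  set y := tensorVec (mode1 P X)
  have hq : IsStarProjection q :=
    ((IsStarProjection.one _).kronecker ((⟨hQ, hQ'⟩ : IsStarProjection Q).kronecker
      (IsStarProjection.one (Matrix (Fin c) (Fin c) ℂ)))).map _
  have hr : IsStarProjection r :=
    ((IsStarProjection.one _).kronecker ((IsStarProjection.one _).kronecker
      (⟨hR, hR'⟩ : IsStarProjection R))).map _
  calc ‖x - r (q y)‖ ^ 2 ≤ ‖x - r x‖ ^ 2 + ‖x - q y‖ ^ 2 := hr.norm_sub_apply_sq_le x (q y)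
    _ ≤ ‖x - r x‖ ^ 2 + (‖x - q x‖ ^ 2 + ‖x - y‖ ^ 2) := by
      gcongr; exact hq.norm_sub_apply_sq_le x y
    _ = ‖x - y‖ ^ 2 + ‖x - q x‖ ^ 2 + ‖x - r x‖ ^ 2 := by ring

/-- Projection lemma for tensors (case `d = 3`): for orthogonal projectors `P, Q, R`,
`‖X − X×₁P×₂Q×₃R‖_F² ≤ ‖X − X×₁P‖_F² + ‖X − X×₂Q‖_F² + ‖X − X×₃R‖_F²`. -/
theorem tensor_projection_lemma {a b c : ℕ}
    (P : Matrix (Fin a) (Fin a) ℂ) (hP : P * P = P) (hP' : Pᴴ = P)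
    (Q : Matrix (Fin b) (Fin b) ℂ) (hQ : Q * Q = Q) (hQ' : Qᴴ = Q)
    (R : Matrix (Fin c) (Fin c) ℂ) (hR : R * R = R) (hR' : Rᴴ = R)
    (X : Fin a → Fin b → Fin c → ℂ) :
    tfrob (X - mode3 R (mode2 Q (mode1 P X))) ^ 2
      ≤ tfrob (X - mode1 P X) ^ 2 + tfrob (X - mode2 Q X) ^ 2
        + tfrob (X - mode3 R X) ^ 2 :=
  tensor_projection_lemma_general P Q hQ hQ' R hR hR' X
end
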